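/- Let T > 0, θ > 0 and C ≥ 0. Let 𝒞 be the space of continuous periodic functions ℝ² → ℝ with the supremum norm ‖·‖_∞, and suppose that for each 0 ≤ s ≤ t ≤ T a linear map P_{s,t} : 𝒞 → 𝒞 is given such that: (i) P_{s,s} = Id and P_{t,u} ∘ P_{s,t} = P_{s,u} whenever 0 ≤ s ≤ t ≤ u ≤ T; (ii) if f ≥ 0 then P_{s,t} f ≥ 0; (iii) ‖P_{s,t} f − e^{(t−s)Δ} f‖_∞ ≤ C (t−s)^θ ‖f‖_∞ for all f ∈ 𝒞 and 0 ≤ s < t ≤ T. Then a strong maximum principle holds: for every f ∈ 𝒞 with f ≥ 0 and f not identically zero, and for every t ∈ (0,T] and x ∈ ℝ², one has (P_{0,t} f)(x) > 0. -/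

import Mathlib

/-!
Positivity spreads at a definite rate. In `ℝ × ℝ` (sup metric) a closed ball is a square.
If `g ≥ 0` and `g ≥ ε` on a square of half-side `r`, then `e^{τΔ} min(g, ε) ≥ c ε` on the
square of half-side `r + √τ`, with `c = e^{-9/2}/π`. Truncating at `ε` makes the error
`C τ^θ ‖·‖_∞` of (iii) at most `C τ^θ ε ≤ c ε / 2` once `τ` is small, and positivity of `P`
gives `P_{s,s+τ} g ≥ P_{s,s+τ} min(g, ε) ≥ c ε / 2` on the larger square. Starting from a
square where `f ≥ f(w)/2` and iterating `n` times with `τ = t/n`, the square grows by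
`n √(t/n) = √(nt)`, which eventually exceeds `π`, so it meets every orbit of the period lattice.
-/

open MeasureTheory

/-- A function on `ℝ²` is periodic: invariant under translation by `2πk`,
`k ∈ ℤ²`. -/
def Periodic2 (f : ℝ × ℝ → ℝ) : Prop :=
  ∀ (k₁ k₂ : ℤ) (x y : ℝ), f (x + 2 * Real.pi * k₁, y + 2 * Real.pi * k₂) = f (x, y)

/-- Membership in `𝒞`: continuous periodic functions `ℝ² → ℝ`. -/
def PerCont (f : ℝ × ℝ → ℝ) : Prop := Continuous f ∧ Periodic2 f

/-- The heat semigroup `e^{tΔ}` on `ℝ²` (for `t > 0`), given by convolution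
with the heat kernel `p_t(x) = (4πt)⁻¹ exp(-|x|²/(4t))`. -/
noncomputable def heatOp (t : ℝ) (f : ℝ × ℝ → ℝ) : ℝ × ℝ → ℝ := fun x =>
  ∫ y : ℝ × ℝ, (4 * Real.pi * t)⁻¹ *
    Real.exp (-((x.1 - y.1) ^ 2 + (x.2 - y.2) ^ 2) / (4 * t)) * f y

/-- The supremum norm. -/
noncomputable def supNorm (f : ℝ × ℝ → ℝ) : ℝ := ⨆ x : ℝ × ℝ, |f x|

open Metric Filter Topology Real

noncomputable def heatKernel (t : ℝ) (x y : ℝ × ℝ) : ℝ :=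
  (4 * π * t)⁻¹ * exp (-((x.1 - y.1) ^ 2 + (x.2 - y.2) ^ 2) / (4 * t))

theorem heatOp_eq_integral (t : ℝ) (f : ℝ × ℝ → ℝ) (x : ℝ × ℝ) :
    heatOp t f x = ∫ y, heatKernel t x y * f y := rfl

theorem heatKernel_nonneg {t : ℝ} (ht : 0 ≤ t) (x y : ℝ × ℝ) : 0 ≤ heatKernel t x y := by
  unfold heatKernel; positivity

theorem integrable_heatKernel {t : ℝ} (ht : 0 < t) (x : ℝ × ℝ) :
    Integrable (heatKernel t x) := by
  have hgauss (a : ℝ) : Integrable fun u : ℝ => exp (-(4 * t)⁻¹ * (u - a) ^ 2) :=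
    (integrable_exp_neg_mul_sq (by positivity)).comp_sub_right a
  have hprod := (hgauss x.1).mul_prod (hgauss x.2)
  rw [← Measure.volume_eq_prod] at hprod
  refine (hprod.const_mul (4 * π * t)⁻¹).congr (Eventually.of_forall fun y => ?_)
  simp only [heatKernel, ← exp_add]
  ring_nf

theorem heatKernel_ge_of_dist_le {t : ℝ} (ht : 0 < t) {x y : ℝ × ℝ}
    (hxy : dist x y ≤ 3 * √t) : (4 * π * t)⁻¹ * exp (-(9 / 2)) ≤ heatKernel t x y := by
  have hsq {a b : ℝ} (h : dist a b ≤ 3 * √t) : (a - b) ^ 2 ≤ 9 * t := by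
    rw [dist_eq_norm, Real.norm_eq_abs] at h
    nlinarith [sq_abs (a - b), abs_nonneg (a - b), sq_sqrt ht.le, sqrt_nonneg t]
  rw [Prod.dist_eq, max_le_iff] at hxy
  have h1 := hsq hxy.1
  have h2 := hsq hxy.2
  unfold heatKernel
  gcongr
  rw [neg_div, neg_le_neg_iff, div_le_iff₀ (by positivity)]
  linarith

theorem volume_real_closedBall_prod (z : ℝ × ℝ) {r : ℝ} (hr : 0 ≤ r) :
    volume.real (closedBall z r) = (2 * r) ^ 2 := by
  rw [← closedBall_prod_same, measureReal_def, Measure.volume_eq_prod, Measure.prod_prod,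
    Real.volume_closedBall, Real.volume_closedBall, ENNReal.toReal_mul,
    ENNReal.toReal_ofReal (by positivity), sq]

/-- `(4πt)⁻¹ e^{-9/2}` bounds `p_t` at distance `3√t`, times the area `4t` of the square of
half-side `√t`. -/
noncomputable def heatSpreadConst : ℝ := exp (-(9 / 2)) / π

theorem heatSpreadConst_pos : 0 < heatSpreadConst := by
  unfold heatSpreadConst; have := pi_pos; positivity

theorem le_heatOp_of_le_on_closedBall {t ε M : ℝ} (ht : 0 < t) (hε : 0 ≤ ε)
    {h : ℝ × ℝ → ℝ} (hc : Continuous h) (h0 : ∀ y, 0 ≤ h y) (hM : ∀ y, h y ≤ M)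
    {z : ℝ × ℝ} (hz : ∀ y ∈ closedBall z √t, ε ≤ h y) {x : ℝ × ℝ} (hx : dist x z ≤ 2 * √t) :
    ε * heatSpreadConst ≤ heatOp t h x := by
  set F := fun y => heatKernel t x y * h y
  have hF0 (y) : 0 ≤ F y := mul_nonneg (heatKernel_nonneg ht.le x y) (h0 y)
  have hint : Integrable F := by
    refine ((integrable_heatKernel ht x).mul_const M).mono'
      ((Continuous.mul (by unfold heatKernel; fun_prop) hc).aestronglyMeasurable) ?_
    filter_upwards with y
    rw [Real.norm_eq_abs, abs_of_nonneg (hF0 y)]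
    exact mul_le_mul_of_nonneg_left (hM y) (heatKernel_nonneg ht.le x y)
  have hlow : ∀ y ∈ closedBall z √t, (4 * π * t)⁻¹ * exp (-(9 / 2)) * ε ≤ F y := by
    intro y hy
    have hxy : dist x y ≤ 3 * √t := by
      linarith [dist_triangle x z y, dist_comm y z ▸ mem_closedBall.1 hy]
    exact mul_le_mul (heatKernel_ge_of_dist_le ht hxy) (hz y hy) hε
      (heatKernel_nonneg ht.le x y)
  calc ε * heatSpreadConst
      = (4 * π * t)⁻¹ * exp (-(9 / 2)) * ε * volume.real (closedBall z √t) := by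
        rw [volume_real_closedBall_prod z (sqrt_nonneg t), mul_pow, sq_sqrt ht.le,
          heatSpreadConst]
        field_simp
        ring
    _ ≤ ∫ y in closedBall z √t, F y :=
        setIntegral_ge_of_const_le_real measurableSet_closedBall measure_closedBall_lt_top.ne
          hlow hint.integrableOn
    _ ≤ ∫ y, F y := setIntegral_le_integral hint (Eventually.of_forall hF0)
    _ = heatOp t h x := (heatOp_eq_integral t h x).symm

theorem exists_closedBall_subset_of_dist_le {E : Type*}
    [NormedAddCommGroup E] [NormedSpace ℝ E]
    {w y : E} {r s : ℝ} (hs : 0 ≤ s) (hsr : s ≤ r) (hy : dist y w ≤ r + s) :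
    ∃ z, closedBall z s ⊆ closedBall w r ∧ dist y z ≤ 2 * s := by
  rcases (show 0 ≤ r + s by linarith).eq_or_lt with h | h
  · exact ⟨w, closedBall_subset_closedBall hsr, by linarith⟩
  set c := (r - s) / (r + s)
  have hc : c * (r + s) = r - s := div_mul_cancel₀ _ h.ne'
  have hc0 : 0 ≤ c := div_nonneg (by linarith) h.le
  have hc1 : 0 ≤ 1 - c := by nlinarith
  refine ⟨AffineMap.lineMap w y c, closedBall_subset_closedBall' ?_, ?_⟩
  · rw [dist_lineMap_left, Real.norm_of_nonneg hc0, dist_comm]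
    nlinarith [mul_le_mul_of_nonneg_left hy hc0]
  · rw [dist_comm, dist_lineMap_right, Real.norm_of_nonneg hc1, dist_comm]
    nlinarith [mul_le_mul_of_nonneg_left hy hc1]

theorem exists_int_abs_sub_two_pi_mul_le (a : ℝ) : ∃ k : ℤ, |a - 2 * π * k| ≤ π := by
  refine ⟨round (a / (2 * π)), ?_⟩
  have h2π : 0 < 2 * π := by positivity
  calc |a - 2 * π * round (a / (2 * π))| = 2 * π * |a / (2 * π) - round (a / (2 * π))| := by
        rw [← abs_of_pos h2π, ← abs_mul, abs_of_pos h2π, mul_sub, mul_div_cancel₀ _ h2π.ne']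
    _ ≤ 2 * π * (1 / 2) := by gcongr; exact abs_sub_round _
    _ = π := by ring

theorem Periodic2.exists_mem_closedBall_eq {f : ℝ × ℝ → ℝ} (hf : Periodic2 f) (w x : ℝ × ℝ) :
    ∃ y ∈ closedBall w π, f y = f x := by
  obtain ⟨k₁, hk₁⟩ := exists_int_abs_sub_two_pi_mul_le (x.1 - w.1)
  obtain ⟨k₂, hk₂⟩ := exists_int_abs_sub_two_pi_mul_le (x.2 - w.2)
  refine ⟨(x.1 - 2 * π * k₁, x.2 - 2 * π * k₂), ?_, ?_⟩
  · rw [mem_closedBall, Prod.dist_eq, max_le_iff, Real.dist_eq, Real.dist_eq]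
    constructor
    · rwa [sub_right_comm]
    · rwa [sub_right_comm]
  · simpa using (hf k₁ k₂ (x.1 - 2 * π * k₁) (x.2 - 2 * π * k₂)).symm

theorem PerCont.linear_comb {f g : ℝ × ℝ → ℝ} (hf : PerCont f) (hg : PerCont g) (a b : ℝ) :
    PerCont fun x => a * f x + b * g x :=
  ⟨(continuous_const.mul hf.1).add (continuous_const.mul hg.1), fun k₁ k₂ x y => by
    simp only [hf.2 k₁ k₂ x y, hg.2 k₁ k₂ x y]⟩

theorem PerCont.min_const {f : ℝ × ℝ → ℝ} (hf : PerCont f) (c : ℝ) :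
    PerCont fun x => min (f x) c :=
  ⟨hf.1.min continuous_const, fun k₁ k₂ x y => by simp only [hf.2 k₁ k₂ x y]⟩

theorem supNorm_nonneg (f : ℝ × ℝ → ℝ) : 0 ≤ supNorm f :=
  Real.iSup_nonneg fun _ => abs_nonneg _

theorem supNorm_le {f : ℝ × ℝ → ℝ} {M : ℝ} (hf : ∀ x, |f x| ≤ M) : supNorm f ≤ M :=
  ciSup_le hf

section Operator

variable {Q : (ℝ × ℝ → ℝ) → ℝ × ℝ → ℝ}

theorem mono_of_nonneg_of_linear
    (hlin : ∀ f g, PerCont f → PerCont g → ∀ a b : ℝ,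
      Q (fun x => a * f x + b * g x) = fun x => a * Q f x + b * Q g x)
    (hpos : ∀ f, PerCont f → (∀ x, 0 ≤ f x) → ∀ x, 0 ≤ Q f x)
    {u v : ℝ × ℝ → ℝ} (hu : PerCont u) (hv : PerCont v) (huv : ∀ x, u x ≤ v x) (x : ℝ × ℝ) :
    Q u x ≤ Q v x := by
  have h := hpos _ (hv.linear_comb hu 1 (-1)) (fun y => by linarith [huv y]) x
  rw [hlin v u hv hu] at h
  linarith

theorem lower_bound_spreads_of_near_heatOp {τ K ε r : ℝ} (hτ : 0 < τ)
    (hK : K ≤ heatSpreadConst / 2)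
    (hmono : ∀ u v, PerCont u → PerCont v → (∀ x, u x ≤ v x) → ∀ x, Q u x ≤ Q v x)
    (hnear : ∀ u, PerCont u → ∀ x, |Q u x - heatOp τ u x| ≤ K * supNorm u)
    {g : ℝ × ℝ → ℝ} (hg : PerCont g) (hg0 : ∀ x, 0 ≤ g x) (hε : 0 ≤ ε) (hr : √τ ≤ r)
    {w : ℝ × ℝ} (hgε : ∀ y ∈ closedBall w r, ε ≤ g y) :
    ∀ y ∈ closedBall w (r + √τ), ε * (heatSpreadConst / 2) ≤ Q g y := by
  intro y hy
  obtain ⟨z, hzw, hyz⟩ := exists_closedBall_subset_of_dist_le (sqrt_nonneg τ) hr hy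
  set h := fun x => min (g x) ε
  have hh : PerCont h := hg.min_const ε
  have hh0 (x) : 0 ≤ h x := le_min (hg0 x) hε
  have hhε (x) : h x ≤ ε := min_le_right _ _
  have hheat : ε * heatSpreadConst ≤ heatOp τ h y :=
    le_heatOp_of_le_on_closedBall hτ hε hh.1 hh0 hhε
      (fun x hx => le_min (hgε x (hzw hx)) le_rfl) hyz
  have herr : K * supNorm h ≤ heatSpreadConst / 2 * ε :=
    (mul_le_mul_of_nonneg_right hK (supNorm_nonneg h)).trans <|
      mul_le_mul_of_nonneg_left (supNorm_le fun x => abs_le.2 ⟨by linarith [hh0 x], hhε x⟩)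
        (by linarith [heatSpreadConst_pos])
  calc ε * (heatSpreadConst / 2) ≤ Q h y := by linarith [(abs_le.1 (hnear h hh y)).1]
    _ ≤ Q g y := hmono h g hh hg (fun x => min_le_left _ _) y

end Operator

theorem exists_time_step {t ρ θ c : ℝ} (ht : 0 < t) (hρ : 0 < ρ) (hθ : 0 < θ) (hc : 0 < c)
    (C : ℝ) : ∃ n : ℕ, 0 < n ∧ √(t / n) ≤ ρ ∧ C * (t / n) ^ θ ≤ c ∧ π ≤ n * √(t / n) := by
  have hτ := tendsto_const_div_atTop_nhds_zero_nat t
  have hsqrt : ∀ᶠ n : ℕ in atTop, √(t / n) ≤ ρ := by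
    have := (continuous_sqrt.tendsto 0).comp hτ
    rw [sqrt_zero] at this
    exact this.eventually_le_const hρ
  have herr : ∀ᶠ n : ℕ in atTop, C * (t / n) ^ θ ≤ c := by
    have := ((continuousAt_rpow_const 0 θ (Or.inr hθ.le)).tendsto.comp hτ).const_mul C
    rw [zero_rpow hθ.ne', mul_zero] at this
    exact this.eventually_le_const hc
  obtain ⟨n, hn_sqrt, hn_err, hn_large, hn_pos⟩ := (hsqrt.and (herr.and
    ((eventually_ge_atTop ⌈π ^ 2 / t⌉₊).and (eventually_gt_atTop 0)))).exists
  refine ⟨n, hn_pos, hn_sqrt, hn_err, ?_⟩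
  have hnt : π ^ 2 ≤ n * t := (div_le_iff₀ ht).1 (Nat.ceil_le.1 hn_large)
  have hn : (n : ℝ) ^ 2 * (t / n) = n * t := by field_simp
  calc π = √(π ^ 2) := (sqrt_sq pi_pos.le).symm
    _ ≤ √((n : ℝ) ^ 2 * (t / n)) := sqrt_le_sqrt (hn ▸ hnt)
    _ = n * √(t / n) := by rw [sqrt_mul (by positivity), sqrt_sq (Nat.cast_nonneg n)]

theorem lower_bound_spreads_iterate {T C θ τ ρ ε : ℝ} {P : ℝ → ℝ → (ℝ × ℝ → ℝ) → (ℝ × ℝ → ℝ)}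
    (hmaps : ∀ s t : ℝ, 0 ≤ s → s ≤ t → t ≤ T → ∀ f, PerCont f → PerCont (P s t f))
    (hlin : ∀ s t : ℝ, 0 ≤ s → s ≤ t → t ≤ T → ∀ f g, PerCont f → PerCont g →
      ∀ a b : ℝ, P s t (fun x => a * f x + b * g x) = fun x => a * P s t f x + b * P s t g x)
    (hid : ∀ s : ℝ, 0 ≤ s → s ≤ T → ∀ f, PerCont f → P s s f = f)
    (hsemi : ∀ s t u : ℝ, 0 ≤ s → s ≤ t → t ≤ u → u ≤ T → ∀ f, PerCont f →
      P t u (P s t f) = P s u f)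
    (hpos : ∀ s t : ℝ, 0 ≤ s → s ≤ t → t ≤ T → ∀ f, PerCont f →
      (∀ x, 0 ≤ f x) → ∀ x, 0 ≤ P s t f x)
    (hnear : ∀ s t : ℝ, 0 ≤ s → s < t → t ≤ T → ∀ f, PerCont f →
      ∀ x, |P s t f x - heatOp (t - s) f x| ≤ C * (t - s) ^ θ * supNorm f)
    (hτ : 0 < τ) (hK : C * τ ^ θ ≤ heatSpreadConst / 2) (hρ : √τ ≤ ρ)
    {f : ℝ × ℝ → ℝ} (hf : PerCont f) (hf0 : ∀ x, 0 ≤ f x) (hε : 0 ≤ ε) {w : ℝ × ℝ}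
    (hfε : ∀ y ∈ closedBall w ρ, ε ≤ f y) (k : ℕ) (hkT : k * τ ≤ T) :
    ∀ y ∈ closedBall w (ρ + k * √τ), ε * (heatSpreadConst / 2) ^ k ≤ P 0 (k * τ) f y := by
  induction k with
  | zero =>
    simp only [Nat.cast_zero, zero_mul] at hkT ⊢
    simpa [hid 0 le_rfl hkT f hf] using hfε
  | succ k ih =>
    push_cast at hkT ⊢
    rw [add_mul, one_mul] at hkT ⊢
    have hk0 : 0 ≤ k * τ := by positivity
    have hkk : k * τ ≤ k * τ + τ := by linarith
    have hstep := lower_bound_spreads_of_near_heatOp hτ hK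
      (fun u v => mono_of_nonneg_of_linear (hlin _ _ hk0 hkk hkT) (hpos _ _ hk0 hkk hkT))
      (by simpa only [add_sub_cancel_left] using hnear _ _ hk0 (by linarith) hkT)
      (hmaps 0 _ le_rfl hk0 (hkk.trans hkT) f hf) (hpos 0 _ le_rfl hk0 (hkk.trans hkT) f hf hf0)
      (mul_nonneg hε (pow_nonneg (half_pos heatSpreadConst_pos).le k))
      (by nlinarith [sqrt_nonneg τ])
      (ih (hkk.trans hkT))
    rw [hsemi 0 _ _ le_rfl hk0 hkk hkT f hf] at hstep
    simpa only [add_mul, one_mul, ← add_assoc, pow_succ, mul_assoc] using hstep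

theorem stmt_4_general (T θ C : ℝ) (hθ : 0 < θ)
    (P : ℝ → ℝ → (ℝ × ℝ → ℝ) → (ℝ × ℝ → ℝ))
    -- `P s t` maps `𝒞` into `𝒞`
    (hmaps : ∀ s t : ℝ, 0 ≤ s → s ≤ t → t ≤ T → ∀ f, PerCont f → PerCont (P s t f))
    -- `P s t` is linear
    (hlin : ∀ s t : ℝ, 0 ≤ s → s ≤ t → t ≤ T → ∀ f g, PerCont f → PerCont g →
      ∀ a b : ℝ, P s t (fun x => a * f x + b * g x)
        = fun x => a * P s t f x + b * P s t g x)
    -- (i) `P s s = Id` and the two-parameter semigroup property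
    (hid : ∀ s : ℝ, 0 ≤ s → s ≤ T → ∀ f, PerCont f → P s s f = f)
    (hsemi : ∀ s t u : ℝ, 0 ≤ s → s ≤ t → t ≤ u → u ≤ T → ∀ f, PerCont f →
      P t u (P s t f) = P s u f)
    -- (ii) positivity
    (hpos : ∀ s t : ℝ, 0 ≤ s → s ≤ t → t ≤ T → ∀ f, PerCont f →
      (∀ x, 0 ≤ f x) → ∀ x, 0 ≤ P s t f x)
    -- (iii) closeness to the heat semigroup
    (hnear : ∀ s t : ℝ, 0 ≤ s → s < t → t ≤ T → ∀ f, PerCont f →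
      ∀ x, |P s t f x - heatOp (t - s) f x| ≤ C * (t - s) ^ θ * supNorm f) :
    ∀ f, PerCont f → (∀ x, 0 ≤ f x) → (∃ x, f x ≠ 0) →
      ∀ t : ℝ, 0 < t → t ≤ T → ∀ x, 0 < P 0 t f x := by
  intro f hf hf0 ⟨w, hw⟩ t ht htT x
  have hfw : 0 < f w := (hf0 w).lt_of_ne' hw
  obtain ⟨ρ, hρ, hfρ⟩ := nhds_basis_closedBall.eventually_iff.1
    ((hf.1.tendsto w).eventually_const_le (half_lt_self hfw))
  obtain ⟨n, hn, hsqrt, herr, hcover⟩ :=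
    exists_time_step ht hρ hθ (half_pos heatSpreadConst_pos) C
  have hnτ : (n : ℝ) * (t / n) = t := mul_div_cancel₀ t (Nat.cast_pos.2 hn).ne'
  have hbound := lower_bound_spreads_iterate hmaps hlin hid hsemi hpos hnear
    (div_pos ht (Nat.cast_pos.2 hn)) herr hsqrt hf hf0 (half_pos hfw).le hfρ n (hnτ.trans_le htT)
  obtain ⟨y, hy, hyx⟩ := (hmaps 0 t le_rfl ht.le htT f hf).2.exists_mem_closedBall_eq w x
  rw [← hyx, ← hnτ]
  refine lt_of_lt_of_le (by have := heatSpreadConst_pos; positivity) (hbound y ?_)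
  exact closedBall_subset_closedBall (by linarith) hy

/-- a strong maximum principle for two-parameter positive linear
semigroups on continuous periodic functions that are close to the heat
semigroup. -/
theorem stmt_4 (T θ C : ℝ) (hT : 0 < T) (hθ : 0 < θ) (hC : 0 ≤ C)
    (P : ℝ → ℝ → (ℝ × ℝ → ℝ) → (ℝ × ℝ → ℝ))
    -- `P s t` maps `𝒞` into `𝒞`
    (hmaps : ∀ s t : ℝ, 0 ≤ s → s ≤ t → t ≤ T → ∀ f, PerCont f → PerCont (P s t f))
    -- `P s t` is linear
    (hlin : ∀ s t : ℝ, 0 ≤ s → s ≤ t → t ≤ T → ∀ f g, PerCont f → PerCont g →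
      ∀ a b : ℝ, P s t (fun x => a * f x + b * g x)
        = fun x => a * P s t f x + b * P s t g x)
    -- (i) `P s s = Id` and the two-parameter semigroup property
    (hid : ∀ s : ℝ, 0 ≤ s → s ≤ T → ∀ f, PerCont f → P s s f = f)
    (hsemi : ∀ s t u : ℝ, 0 ≤ s → s ≤ t → t ≤ u → u ≤ T → ∀ f, PerCont f →
      P t u (P s t f) = P s u f)
    -- (ii) positivity
    (hpos : ∀ s t : ℝ, 0 ≤ s → s ≤ t → t ≤ T → ∀ f, PerCont f →
      (∀ x, 0 ≤ f x) → ∀ x, 0 ≤ P s t f x)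
    -- (iii) closeness to the heat semigroup
    (hnear : ∀ s t : ℝ, 0 ≤ s → s < t → t ≤ T → ∀ f, PerCont f →
      ∀ x, |P s t f x - heatOp (t - s) f x| ≤ C * (t - s) ^ θ * supNorm f) :
    ∀ f, PerCont f → (∀ x, 0 ≤ f x) → (∃ x, f x ≠ 0) →
      ∀ t : ℝ, 0 < t → t ≤ T → ∀ x, 0 < P 0 t f x :=
  stmt_4_general T θ C hθ P hmaps hlin hid hsemi hpos hnear
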